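/- arXiv:1009.5589 — 2 statements merged into one kernel-verified Lean document; each statement's English description precedes it below -/
import Mathlib

section
/- For t ∈ [0,1] and a fixed unit vector σ with σ·v > 0 on its domain, the map v ↦ v + t(v'-v) where v' = (v+|v|σ)/2 has Jacobian determinant bounded below by a positive constant uniform in t and σ; consequently, for any φ ∈ L²(ℝ³), ∫ |D²φ(v+t(v'-v))|² dv ≤ C ∫ |D²φ(v)|² dv with C independent of t and σ. -/
/-!
With `a = 1 - t/2 ∈ [1/2, 1]` and `b = t/2 ≥ 0` the map is `w ↦ a • w + b ‖w‖ • σ`. Its derivative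
at `v ≠ 0` is the rank-one perturbation `a • id + (b / ‖v‖) ⟪v, ·⟫ σ` of `a • id`, so by the
matrix determinant lemma its Jacobian is `a ^ 3 (1 + b ⟪σ, v⟫ / (a ‖v‖)) ≥ a ^ 3 ≥ 1/8` on the
half-space. The map is injective there: pairing `a (v - w) = b (‖w‖ - ‖v‖) σ` with `v + w` forces
`‖v‖ = ‖w‖`. The change-of-variables formula then gives the integral bound with `C = 8`.
-/

open MeasureTheory RealInnerProductSpace

namespace LinearMap

theorem det_id_add_smulRight {R M : Type*} [CommRing R] [AddCommGroup M] [Module R M]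
    [Module.Free R M] [Module.Finite R M] (f : M →ₗ[R] R) (x : M) :
    LinearMap.det (LinearMap.id + f.smulRight x) = 1 + f x := by
  let b := Module.Free.chooseBasis R M
  rw [← LinearMap.det_toMatrix b, map_add, LinearMap.toMatrix_id, LinearMap.toMatrix_smulRight,
    Matrix.vecMulVec_eq Unit, Matrix.det_one_add_replicateCol_mul_replicateRow, dotProduct]
  conv_rhs => rw [← b.sum_repr x, map_sum]
  simp only [map_smul, smul_eq_mul, Function.comp_apply, mul_comm]

variable {K M : Type*} [Field K] [AddCommGroup M] [Module K M] [FiniteDimensional K M]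

theorem det_smul_id_add_smulRight {a : K} (ha : a ≠ 0) (f : M →ₗ[K] K) (x : M) :
    LinearMap.det (a • LinearMap.id + f.smulRight x) =
      a ^ Module.finrank K M * (1 + a⁻¹ * f x) := by
  have : a • LinearMap.id + f.smulRight x = a • (LinearMap.id + (a⁻¹ • f).smulRight x) := by
    ext y; simp [smul_smul, ha]
  rw [this, det_smul, det_id_add_smulRight]
  rfl

theorem pow_finrank_le_det_smul_id_add_smulRight [LinearOrder K] [IsStrictOrderedRing K]
    {a : K} (ha : 0 < a) (f : M →ₗ[K] K) {x : M} (hx : 0 ≤ f x) :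
    a ^ Module.finrank K M ≤ LinearMap.det (a • LinearMap.id + f.smulRight x) := by
  rw [det_smul_id_add_smulRight ha.ne']
  exact le_mul_of_one_le_right (by positivity)
    (le_add_of_nonneg_right (mul_nonneg (inv_nonneg.2 ha.le) hx))

end LinearMap

section NormShift

variable {E : Type*} [NormedAddCommGroup E] [InnerProductSpace ℝ E]

theorem hasFDerivAt_norm_of_ne_zero {v : E} (hv : v ≠ 0) :
    HasFDerivAt (fun w : E => ‖w‖) (‖v‖⁻¹ • innerSL ℝ v) v := by
  have := ((hasFDerivAt_id v).norm_sq).sqrt (pow_ne_zero 2 (norm_ne_zero_iff.2 hv))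
  simp only [id, Real.sqrt_sq (norm_nonneg _)] at this
  convert this using 1
  ext w
  have : ‖v‖ ≠ 0 := norm_ne_zero_iff.2 hv
  simp
  field_simp

theorem hasFDerivAt_smul_add_norm_smul (a b : ℝ) (σ : E) {v : E} (hv : v ≠ 0) :
    HasFDerivAt (fun w : E => a • w + (b * ‖w‖) • σ)
      (a • ContinuousLinearMap.id ℝ E + ((b * ‖v‖⁻¹) • innerSL ℝ v).smulRight σ) v := by
  have := ((hasFDerivAt_id v).const_smul a).add
    (((hasFDerivAt_norm_of_ne_zero hv).const_mul b).smul_const σ)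
  rwa [smul_smul] at this

theorem pow_finrank_le_det_fderiv_smul_add_norm_smul [FiniteDimensional ℝ E] {a b : ℝ}
    (ha : 0 < a) (hb : 0 ≤ b) {σ v : E} (hv : 0 ≤ ⟪σ, v⟫) :
    a ^ Module.finrank ℝ E ≤ LinearMap.det
      ((a • ContinuousLinearMap.id ℝ E + ((b * ‖v‖⁻¹) • innerSL ℝ v).smulRight σ :
        E →L[ℝ] E) : E →ₗ[ℝ] E) := by
  refine (LinearMap.pow_finrank_le_det_smul_id_add_smulRight ha
    (((b * ‖v‖⁻¹) • innerSL ℝ v : E →L[ℝ] ℝ) : E →ₗ[ℝ] ℝ) (x := σ) ?_).trans_eq ?_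
  · simp only [ContinuousLinearMap.coe_coe, FunLike.coe_smul, Pi.smul_apply,
      innerSL_apply_apply, smul_eq_mul]
    rw [real_inner_comm]
    exact mul_nonneg (by positivity) hv
  · congr 1

theorem injOn_smul_add_norm_smul {a b : ℝ} (ha : 0 < a) (hb : 0 ≤ b) (σ : E) :
    Set.InjOn (fun w : E => a • w + (b * ‖w‖) • σ) {w | 0 ≤ ⟪σ, w⟫} := by
  intro v hv w hw h
  simp only [Set.mem_ofPred_eq] at hv hw h
  have hdiff : a • (v - w) = (b * (‖w‖ - ‖v‖)) • σ := by
    linear_combination (norm := module) h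
  have hnorm : ‖v‖ = ‖w‖ := by
    have key : a * (‖v‖ ^ 2 - ‖w‖ ^ 2) = b * (‖w‖ - ‖v‖) * ⟪σ, v + w⟫ := by
      have := congrArg (fun u => ⟪u, v + w⟫) hdiff
      simp only [real_inner_smul_left, inner_sub_left, inner_add_right,
        real_inner_self_eq_norm_sq, real_inner_comm v w] at this
      rw [inner_add_right]; linear_combination this
    have hfac : (‖v‖ - ‖w‖) * (a * (‖v‖ + ‖w‖) + b * ⟪σ, v + w⟫) = 0 := by
      linear_combination key
    have hσ : 0 ≤ b * ⟪σ, v + w⟫ := mul_nonneg hb (by rw [inner_add_right]; linarith)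
    rcases mul_eq_zero.1 hfac with h | h
    · linarith
    · have : ‖v‖ + ‖w‖ = 0 := by nlinarith [norm_nonneg v, norm_nonneg w]
      linarith [norm_nonneg v, norm_nonneg w]
  have : a • (v - w) = 0 := by rw [hdiff, hnorm, sub_self, mul_zero, zero_smul]
  exact sub_eq_zero.1 ((smul_eq_zero.1 this).resolve_left ha.ne')

end NormShift

theorem lintegral_comp_le_of_le_abs_det_fderiv {E : Type*} [NormedAddCommGroup E]
    [NormedSpace ℝ E] [FiniteDimensional ℝ E] [MeasurableSpace E] [BorelSpace E]
    (μ : Measure E) [μ.IsAddHaarMeasure] {s : Set E} {f : E → E} {f' : E → E →L[ℝ] E} {c : ℝ}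
    (hc : 0 < c) (hs : MeasurableSet s) (hf' : ∀ x ∈ s, HasFDerivWithinAt f (f' x) s x)
    (hf : Set.InjOn f s) (hdet : ∀ x ∈ s, c ≤ |(f' x : E →ₗ[ℝ] E).det|) (g : E → ENNReal) :
    ∫⁻ x in s, g (f x) ∂μ ≤ ENNReal.ofReal c⁻¹ * ∫⁻ y, g y ∂μ := calc
  ∫⁻ x in s, g (f x) ∂μ
      ≤ ∫⁻ x in s, ENNReal.ofReal c⁻¹ * (ENNReal.ofReal |(f' x : E →ₗ[ℝ] E).det| * g (f x)) ∂μ := by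
    refine setLIntegral_mono' hs fun x hx => ?_
    have : 1 ≤ ENNReal.ofReal c⁻¹ * ENNReal.ofReal |(f' x : E →ₗ[ℝ] E).det| := by
      rw [← ENNReal.ofReal_mul (inv_nonneg.2 hc.le), ENNReal.one_le_ofReal]
      exact (one_le_inv_mul₀ hc).2 (hdet x hx)
    rw [← mul_assoc]
    exact le_mul_of_one_le_left' this
  _ = ENNReal.ofReal c⁻¹ * ∫⁻ y in f '' s, g y ∂μ := by
    rw [lintegral_const_mul' _ _ ENNReal.ofReal_ne_top,
      lintegral_image_eq_lintegral_abs_det_fderiv_mul μ hs hf' hf]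
  _ ≤ ENNReal.ofReal c⁻¹ * ∫⁻ y, g y ∂μ := by
    gcongr
    exact Measure.restrict_le_self

/-- For `t ∈ [0,1]` and a unit vector `σ`, the map
`v ↦ v + t(v' - v)` with `v' = (v + |v|σ)/2`, restricted to the half-space `σ·v > 0`,
has Jacobian determinant bounded below by a positive constant uniform in `t` and `σ`;
consequently `∫ |D²φ(v + t(v'-v))|² dv ≤ C ∫ |D²φ(v)|² dv` with `C` independent of
`t` and `σ` (here `g` stands for `|D²φ|²`). -/
theorem stmt6 :
    ∃ c : ℝ, 0 < c ∧ ∃ C : ℝ, 0 < C ∧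
      ∀ (t : ℝ), t ∈ Set.Icc (0 : ℝ) 1 →
      ∀ (σ : EuclideanSpace ℝ (Fin 3)), ‖σ‖ = 1 →
        (∀ v : EuclideanSpace ℝ (Fin 3), 0 < ⟪σ, v⟫ →
          ∃ D : EuclideanSpace ℝ (Fin 3) →L[ℝ] EuclideanSpace ℝ (Fin 3),
            HasFDerivAt
              (fun w : EuclideanSpace ℝ (Fin 3) =>
                w + t • ((1/2 : ℝ) • (w + ‖w‖ • σ) - w)) D v ∧
            c ≤ |LinearMap.det (D : EuclideanSpace ℝ (Fin 3) →ₗ[ℝ] EuclideanSpace ℝ (Fin 3))|) ∧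
        ∀ g : EuclideanSpace ℝ (Fin 3) → ENNReal, Measurable g →
          (∫⁻ v in {v : EuclideanSpace ℝ (Fin 3) | 0 < ⟪σ, v⟫},
              g (v + t • ((1/2 : ℝ) • (v + ‖v‖ • σ) - v)) ∂volume)
            ≤ ENNReal.ofReal C * ∫⁻ v, g v ∂volume := by
  refine ⟨1/8, by norm_num, 8, by norm_num, fun t ht σ _ => ?_⟩
  have hmap : ∀ w : EuclideanSpace ℝ (Fin 3),
      w + t • ((1/2 : ℝ) • (w + ‖w‖ • σ) - w) = (1 - t/2) • w + (t/2 * ‖w‖) • σ :=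
    fun w => by module
  simp only [hmap]
  let D (v : EuclideanSpace ℝ (Fin 3)) : EuclideanSpace ℝ (Fin 3) →L[ℝ] EuclideanSpace ℝ (Fin 3) :=
    (1 - t/2) • ContinuousLinearMap.id ℝ _ + ((t/2 * ‖v‖⁻¹) • innerSL ℝ v).smulRight σ
  have hD : ∀ v, 0 < ⟪σ, v⟫ →
      HasFDerivAt (fun w => (1 - t/2) • w + (t/2 * ‖w‖) • σ) (D v) v ∧
        1/8 ≤ |LinearMap.det (D v : EuclideanSpace ℝ (Fin 3) →ₗ[ℝ] EuclideanSpace ℝ (Fin 3))| := by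
    intro v hv
    refine ⟨hasFDerivAt_smul_add_norm_smul _ _ σ (by rintro rfl; simp at hv), ?_⟩
    have hdet := pow_finrank_le_det_fderiv_smul_add_norm_smul (E := EuclideanSpace ℝ (Fin 3))
      (a := 1 - t/2) (b := t/2) (by linarith [ht.2]) (by linarith [ht.1]) hv.le
    rw [finrank_euclideanSpace_fin] at hdet
    have : (1/2 : ℝ) ^ 3 ≤ (1 - t/2) ^ 3 := pow_le_pow_left₀ (by norm_num) (by linarith [ht.2]) 3
    exact le_abs.2 (Or.inl (by linarith))
  refine ⟨fun v hv => ⟨_, hD v hv⟩, fun g _ => ?_⟩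
  have hs : MeasurableSet {v : EuclideanSpace ℝ (Fin 3) | 0 < ⟪σ, v⟫} :=
    (isOpen_lt continuous_const (continuous_const.inner continuous_id)).measurableSet
  have hinj : Set.InjOn (fun w => (1 - t/2) • w + (t/2 * ‖w‖) • σ) {v | 0 < ⟪σ, v⟫} :=
    (injOn_smul_add_norm_smul (by linarith [ht.2]) (by linarith [ht.1]) σ).mono
      fun v (hv : 0 < ⟪σ, v⟫) => hv.le
  have := lintegral_comp_le_of_le_abs_det_fderiv volume (by norm_num : (0 : ℝ) < 1/8) hs
    (fun v hv => (hD v hv).1.hasFDerivWithinAt) hinj (fun v hv => (hD v hv).2) g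
  rwa [show (1/8 : ℝ)⁻¹ = 8 by norm_num] at this
end

section
/- Vanishing diagonal mode: B(−m,m) = 0 for all m ∈ ℤ³, where B(l,m) = ∫_{B(0,2λπ)} dq ∫_{S²} dσ B(q,θ)[e^{i l·q⁺ + i m·q⁻} − e^{i q·m}]; consequently the spectral scheme ∂_t f̂_k = Σ_{l+m=k} f̂_l f̂_m B(l,m) conserves the zeroth Fourier mode f̂_0 (mass) in time. -/
/-
For `l = -m` the exponent `l·q⁺ + m·q⁻` collapses to `-|q| m·σ`, so the integrand of `B(-m,m)` is
`B(q,σ) (e^{-i|q| m·σ} - e^{i q·m})`. Writing `q = r u` in polar coordinates, the involution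
`(r, u, σ) ↦ (r, -σ, -u)` preserves `dq dσ = r² dr du dσ`, the ball `r < 2λπ` and the kernel
(the angle `u·σ` is unchanged), while it exchanges the two exponentials. Hence the integral is its
own negative. Then `∂_t f̂_0` is a sum of multiples of `B(-m,m)`, so `f̂_0` is constant.
-/

open MeasureTheory RealInnerProductSpace Real

noncomputable section

/-- The (surface) measure on the unit sphere of `ℝ³`. -/
def sphMeasure : Measure (Metric.sphere (0 : EuclideanSpace ℝ (Fin 3)) 1) :=
  (volume : Measure (EuclideanSpace ℝ (Fin 3))).toSphere

/-- An integer vector of `ℤ³` regarded as a vector of `ℝ³`. -/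
def iVec (l : Fin 3 → ℤ) : EuclideanSpace ℝ (Fin 3) := WithLp.toLp 2 (fun i => (l i : ℝ))

/-- The Boltzmann kernel modes
`B(l,m) = ∫_{B(0,2λπ)} dq ∫_{S²} dσ B(q,σ) [e^{i l·q⁺ + i m·q⁻} - e^{i q·m}]`,
where `q⁺ = (q + |q|σ)/2`, `q⁻ = (q - |q|σ)/2` and the (real, nonnegative) kernel
`Bk q σ` stands for `B(q,θ)` with `cos θ = q·σ/|q|`. -/
def kernelMode (lam : ℝ) (Bk : EuclideanSpace ℝ (Fin 3) → EuclideanSpace ℝ (Fin 3) → ℝ)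
    (l m : EuclideanSpace ℝ (Fin 3)) : ℂ :=
  ∫ q in Metric.ball (0 : EuclideanSpace ℝ (Fin 3)) (2 * lam * π),
    ∫ σ : Metric.sphere (0 : EuclideanSpace ℝ (Fin 3)) 1,
      (Bk q (σ : EuclideanSpace ℝ (Fin 3)) : ℂ) *
        (Complex.exp (Complex.I *
            ((⟪l, (1/2 : ℝ) • (q + ‖q‖ • (σ : EuclideanSpace ℝ (Fin 3)))⟫ +
              ⟪m, (1/2 : ℝ) • (q - ‖q‖ • (σ : EuclideanSpace ℝ (Fin 3)))⟫ : ℝ) : ℂ)) -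
          Complex.exp (Complex.I * ((⟪q, m⟫ : ℝ) : ℂ))) ∂sphMeasure

open Metric Set
open scoped Pointwise

theorem MeasureTheory.MeasurePreserving.integral_eq_zero_of_comp_eq_neg {α F : Type*}
    [MeasurableSpace α] [NormedAddCommGroup F] [NormedSpace ℝ F] {ν : Measure α} {e : α ≃ᵐ α}
    {g : α → F} (he : MeasurePreserving e ν ν) (hg : ∀ x, g (e x) = -g x) : ∫ x, g x ∂ν = 0 := by
  have h : ∫ x, g x ∂ν = -∫ x, g x ∂ν := by
    conv_lhs => rw [← he.integral_comp' g]
    simp only [hg, integral_neg]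
  have := IsAddTorsionFree.of_isTorsionFree ℝ F
  exact self_eq_neg.mp h

theorem MeasureTheory.Integrable.smul_of_integrable_mul_norm {α F : Type*} [MeasurableSpace α]
    {μ : Measure α} [NormedAddCommGroup F] [NormedSpace ℝ F] {g : α → ℝ} {D : α → F}
    (hD : AEStronglyMeasurable D μ) (h : Integrable (fun x => g x * ‖D x‖) μ) :
    Integrable (fun x => g x • D x) μ := by
  have hmeas : AEStronglyMeasurable (fun x => (g x * ‖D x‖) • (‖D x‖⁻¹ • D x)) μ :=
    h.1.smul (hD.norm.aemeasurable.inv.aestronglyMeasurable.smul hD)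
  refine Integrable.mono' h.norm (hmeas.congr (.of_forall fun x => ?_)) (.of_forall fun x => ?_)
  · by_cases hx : D x = 0
    · simp [hx]
    · dsimp only
      rw [smul_smul, mul_assoc, mul_inv_cancel₀ (norm_ne_zero_iff.mpr hx), mul_one]
  · simp [norm_smul]

section Polar

variable {E : Type*} [NormedAddCommGroup E] [MeasurableSpace E] [BorelSpace E]

/-- In polar coordinates `q = r • u`, the involution `(q, σ) ↦ (r • -σ, -u)`. -/
def polarFlip : (sphere (0 : E) 1 × Ioi (0 : ℝ)) × sphere (0 : E) 1 ≃ᵐ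
    (sphere (0 : E) 1 × Ioi (0 : ℝ)) × sphere (0 : E) 1 where
  toFun z := ((-z.2, z.1.2), -z.1.1)
  invFun z := ((-z.2, z.1.2), -z.1.1)
  left_inv z := by simp
  right_inv z := by simp
  measurable_toFun := by simp only [Equiv.coe_fn_mk]; fun_prop
  measurable_invFun := by simp only [Equiv.coe_fn_symm_mk]; fun_prop

theorem measurePreserving_polarFlip {ρ : Measure (sphere (0 : E) 1)} [SFinite ρ]
    [ρ.IsNegInvariant] {ν : Measure (Ioi (0 : ℝ))} [SFinite ν] :
    MeasurePreserving (polarFlip (E := E)) ((ρ.prod ν).prod ρ) ((ρ.prod ν).prod ρ) := by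
  have hneg := Measure.measurePreserving_neg ρ
  have hrot : MeasurePreserving (fun z : (sphere (0 : E) 1 × Ioi (0 : ℝ)) × sphere (0 : E) 1 =>
      ((z.2, z.1.2), z.1.1)) ((ρ.prod ν).prod ρ) ((ρ.prod ν).prod ρ) :=
    ((Measure.measurePreserving_swap.prod (MeasurePreserving.id ρ)).comp
      Measure.measurePreserving_swap).comp (measurePreserving_prodAssoc ρ ν ρ)
  exact ((hneg.prod (MeasurePreserving.id ν)).prod hneg).comp hrot

variable [NormedSpace ℝ E]

instance MeasureTheory.Measure.toSphere.isNegInvariant (μ : Measure E) [μ.IsNegInvariant] :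
    μ.toSphere.IsNegInvariant := by
  refine ⟨Measure.ext fun s hs => ?_⟩
  rw [Measure.neg_apply, μ.toSphere_apply' hs, μ.toSphere_apply' hs.neg]
  congr 1
  rw [show ((↑) '' (-s) : Set E) = -((↑) '' s) from by
        ext x; simp [mem_neg, neg_eq_iff_eq_neg], Set.smul_neg, Measure.measure_neg]

theorem measurableEmbedding_smul_sphere :
    MeasurableEmbedding (fun p : sphere (0 : E) 1 × Ioi (0 : ℝ) => (p.2 : ℝ) • (p.1 : E)) :=
  (MeasurableEmbedding.subtype_coe (measurableSet_singleton _).compl).comp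
    (homeomorphUnitSphereProd E).symm.measurableEmbedding

variable [FiniteDimensional ℝ E] [Nontrivial E] (μ : Measure E) [μ.IsAddHaarMeasure]

theorem measurePreserving_smul_sphere :
    MeasurePreserving (fun p : sphere (0 : E) 1 × Ioi (0 : ℝ) => (p.2 : ℝ) • (p.1 : E))
      (μ.toSphere.prod (Measure.volumeIoiPow (Module.finrank ℝ E - 1))) μ := by
  have hval : MeasurePreserving (Subtype.val : ({0}ᶜ : Set E) → E) (μ.comap Subtype.val) μ :=
    ⟨measurable_subtype_coe, by
      rw [map_comap_subtype_coe (measurableSet_singleton _).compl, restrict_compl_singleton]⟩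
  exact hval.comp (μ.measurePreserving_homeomorphUnitSphereProd.symm
    (homeomorphUnitSphereProd E).toMeasurableEquiv)

theorem integral_prod_eq_integral_polar_prod {X F : Type*} [MeasurableSpace X]
    [NormedAddCommGroup F] [NormedSpace ℝ F] (ν : Measure X) [SFinite ν] (f : E × X → F) :
    ∫ z, f z ∂(μ.prod ν) = ∫ z, f ((z.1.2 : ℝ) • (z.1.1 : E), z.2)
      ∂((μ.toSphere.prod (Measure.volumeIoiPow (Module.finrank ℝ E - 1))).prod ν) :=
  (((measurePreserving_smul_sphere μ).prod (MeasurePreserving.id ν)).integral_comp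
    (measurableEmbedding_smul_sphere.prodMap .id) f).symm

theorem integral_prod_toSphere_eq_zero_of_antisymm {F : Type*} [NormedAddCommGroup F]
    [NormedSpace ℝ F] (h : E × sphere (0 : E) 1 → F)
    (hh : ∀ (u σ : sphere (0 : E) 1) (r : ℝ), 0 < r →
      h (r • -(σ : E), -u) = -h (r • (u : E), σ)) :
    ∫ z, h z ∂(μ.prod μ.toSphere) = 0 := by
  rw [integral_prod_eq_integral_polar_prod]
  exact measurePreserving_polarFlip.integral_eq_zero_of_comp_eq_neg fun z =>
    hh z.1.1 z.2 z.1.2 z.1.2.2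

theorem integral_ball_prod_toSphere_eq_zero_of_antisymm {F : Type*} [NormedAddCommGroup F]
    [NormedSpace ℝ F] (R : ℝ) (h : E × sphere (0 : E) 1 → F)
    (hh : ∀ (u σ : sphere (0 : E) 1) (r : ℝ), 0 < r →
      h (r • -(σ : E), -u) = -h (r • (u : E), σ)) :
    ∫ z, h z ∂((μ.restrict (ball 0 R)).prod μ.toSphere) = 0 := by
  rw [← Measure.restrict_univ (μ := μ.toSphere), Measure.prod_restrict,
    ← integral_indicator (measurableSet_ball.prod .univ)]
  refine integral_prod_toSphere_eq_zero_of_antisymm μ _ fun u σ r hr => ?_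
  have hσ : ‖r • -(σ : E)‖ = r := by simp [norm_smul, hr.le]
  have hu : ‖r • (u : E)‖ = r := by simp [norm_smul, hr.le]
  simp only [indicator, mem_prod, mem_ball_zero_iff, mem_univ, and_true, hσ, hu]
  split_ifs
  exacts [hh u σ r hr, neg_zero.symm]

end Polar

section Phase

variable {E : Type*} [NormedAddCommGroup E] [InnerProductSpace ℝ E]

def modePhase (l m q σ : E) : ℂ :=
  Complex.exp (Complex.I *
      ((⟪l, (1/2 : ℝ) • (q + ‖q‖ • σ)⟫ + ⟪m, (1/2 : ℝ) • (q - ‖q‖ • σ)⟫ : ℝ) : ℂ)) -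
    Complex.exp (Complex.I * ((⟪q, m⟫ : ℝ) : ℂ))

theorem Continuous.modePhase (l m : E) {X : Type*} [TopologicalSpace X] {f g : X → E}
    (hf : Continuous f) (hg : Continuous g) : Continuous fun x => modePhase l m (f x) (g x) := by
  unfold _root_.modePhase
  fun_prop

theorem modePhase_neg_self (M q σ : E) :
    modePhase (-M) M q σ = Complex.exp (-(Complex.I * ((‖q‖ * ⟪M, σ⟫ : ℝ) : ℂ))) -
      Complex.exp (Complex.I * ((⟪q, M⟫ : ℝ) : ℂ)) := by
  have hphase : ⟪-M, (1/2 : ℝ) • (q + ‖q‖ • σ)⟫ + ⟪M, (1/2 : ℝ) • (q - ‖q‖ • σ)⟫ =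
      -(‖q‖ * ⟪M, σ⟫) := by
    simp only [inner_neg_left, real_inner_smul_right, inner_add_right, inner_sub_right]
    ring
  rw [modePhase, hphase, Complex.ofReal_neg, mul_neg]

theorem modePhase_neg_self_flip (M : E) {u σ : E} (hu : ‖u‖ = 1) (hσ : ‖σ‖ = 1) {r : ℝ}
    (hr : 0 < r) : modePhase (-M) M (r • -σ) (-u) = -modePhase (-M) M (r • u) σ := by
  have hσ' : ‖r • -σ‖ = r := by simp [norm_smul, hσ, hr.le]
  have hu' : ‖r • u‖ = r := by simp [norm_smul, hu, hr.le]
  simp only [modePhase_neg_self, hσ', hu', inner_neg_right, inner_neg_left,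
    real_inner_smul_left, real_inner_comm M σ, real_inner_comm M u]
  push_cast
  ring_nf

end Phase

local notation "ℝ³" => EuclideanSpace ℝ (Fin 3)

instance : IsFiniteMeasure sphMeasure := by
  unfold sphMeasure
  infer_instance

theorem kernelMode_neg_self_eq_zero (lam : ℝ) (Bk : ℝ³ → ℝ³ → ℝ) (β : ℝ → ℝ → ℝ)
    (hBk : ∀ q σ, Bk q σ = β ‖q‖ (⟪q, σ⟫ / ‖q‖)) (M : ℝ³)
    (hint : Integrable (fun p : ℝ³ × sphere (0 : ℝ³) 1 => Bk p.1 p.2 * ‖modePhase (-M) M p.1 p.2‖)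
      ((volume.restrict (ball 0 (2 * lam * π))).prod sphMeasure)) :
    kernelMode lam Bk (-M) M = 0 := by
  have hint' : Integrable (fun z : ℝ³ × sphere (0 : ℝ³) 1 =>
      (Bk z.1 z.2 : ℂ) * modePhase (-M) M z.1 z.2)
      ((volume.restrict (ball 0 (2 * lam * π))).prod sphMeasure) := by
    simpa only [Complex.real_smul] using hint.smul_of_integrable_mul_norm
      (continuous_fst.modePhase (-M) M continuous_snd.subtype_val).aestronglyMeasurable
  refine (integral_prod _ hint').symm.trans ?_
  refine integral_ball_prod_toSphere_eq_zero_of_antisymm volume _ _ fun u σ r hr => ?_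
  have hu : ‖(u : ℝ³)‖ = 1 := norm_eq_of_mem_sphere u
  have hσ : ‖(σ : ℝ³)‖ = 1 := norm_eq_of_mem_sphere σ
  have hkernel : Bk (r • -(σ : ℝ³)) (-(u : ℝ³)) = Bk (r • (u : ℝ³)) σ := by
    simp only [hBk, norm_smul, norm_neg, hu, hσ, inner_smul_left, inner_neg_neg, real_inner_comm]
  simp only [coe_neg_sphere, hkernel, modePhase_neg_self_flip M hu hσ hr, mul_neg]

theorem iVec_neg (m : Fin 3 → ℤ) : iVec (-m) = -iVec m := by
  ext i
  simp [iVec]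

theorem stmt16_general (lam : ℝ)
    (Bk : EuclideanSpace ℝ (Fin 3) → EuclideanSpace ℝ (Fin 3) → ℝ)
    (β : ℝ → ℝ → ℝ)
    (hBk : ∀ q σ, Bk q σ = β ‖q‖ (⟪q, σ⟫ / ‖q‖))
    (hint : ∀ l m : Fin 3 → ℤ,
      Integrable
        (fun p : EuclideanSpace ℝ (Fin 3) ×
            Metric.sphere (0 : EuclideanSpace ℝ (Fin 3)) 1 =>
          Bk p.1 (p.2 : EuclideanSpace ℝ (Fin 3)) *
            ‖(Complex.exp (Complex.I *
                  ((⟪iVec l, (1/2 : ℝ) • (p.1 + ‖p.1‖ • (p.2 : EuclideanSpace ℝ (Fin 3)))⟫ +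
                    ⟪iVec m, (1/2 : ℝ) • (p.1 - ‖p.1‖ • (p.2 : EuclideanSpace ℝ (Fin 3)))⟫ : ℝ) : ℂ)) -
                Complex.exp (Complex.I * ((⟪p.1, iVec m⟫ : ℝ) : ℂ)))‖)
        ((volume.restrict (Metric.ball (0 : EuclideanSpace ℝ (Fin 3)) (2 * lam * π))).prod
          sphMeasure)) :
    (∀ m : Fin 3 → ℤ, kernelMode lam Bk (iVec (-m)) (iVec m) = 0) ∧
    ∀ (fh : ℝ → (Fin 3 → ℤ) → ℂ) (N : ℕ),
      (∀ t : ℝ, HasDerivAt (fun s => fh s 0)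
          (∑ m ∈ Finset.Icc (fun _ => -(N : ℤ)) (fun _ => (N : ℤ)),
            fh t (-m) * fh t m * kernelMode lam Bk (iVec (-m)) (iVec m)) t) →
      ∀ t : ℝ, fh t 0 = fh 0 0 := by
  have hdiag (m : Fin 3 → ℤ) : kernelMode lam Bk (iVec (-m)) (iVec m) = 0 := by
    have hm := hint (-m) m
    rw [iVec_neg] at hm ⊢
    exact kernelMode_neg_self_eq_zero lam Bk β hBk (iVec m) hm
  refine ⟨hdiag, fun fh N hderiv t => ?_⟩
  have hzero (s : ℝ) : HasDerivAt (fun s => fh s 0) 0 s := by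
    simpa only [hdiag, mul_zero, Finset.sum_const_zero] using hderiv s
  exact is_const_of_deriv_eq_zero (fun s => (hzero s).differentiableAt)
    (fun s => (hzero s).deriv) t 0

/-- Vanishing diagonal mode: `B(-m,m) = 0` for all `m ∈ ℤ³`, for a
kernel `B(q,θ)` depending only on `|q|` and `cos θ = q·σ/|q|` and absolutely
integrable; consequently the spectral scheme
`∂_t f̂_k = Σ_{l+m=k} f̂_l f̂_m B(l,m)` conserves the zeroth Fourier mode
`f̂_0` (the mass) in time. -/
theorem stmt16 (lam : ℝ) (hlam : 0 < lam)
    (Bk : EuclideanSpace ℝ (Fin 3) → EuclideanSpace ℝ (Fin 3) → ℝ)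
    (β : ℝ → ℝ → ℝ)
    (hBk : ∀ q σ, Bk q σ = β ‖q‖ (⟪q, σ⟫ / ‖q‖))
    (hBpos : ∀ q σ, 0 ≤ Bk q σ)
    (hint : ∀ l m : Fin 3 → ℤ,
      Integrable
        (fun p : EuclideanSpace ℝ (Fin 3) ×
            Metric.sphere (0 : EuclideanSpace ℝ (Fin 3)) 1 =>
          Bk p.1 (p.2 : EuclideanSpace ℝ (Fin 3)) *
            ‖(Complex.exp (Complex.I *
                  ((⟪iVec l, (1/2 : ℝ) • (p.1 + ‖p.1‖ • (p.2 : EuclideanSpace ℝ (Fin 3)))⟫ +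
                    ⟪iVec m, (1/2 : ℝ) • (p.1 - ‖p.1‖ • (p.2 : EuclideanSpace ℝ (Fin 3)))⟫ : ℝ) : ℂ)) -
                Complex.exp (Complex.I * ((⟪p.1, iVec m⟫ : ℝ) : ℂ)))‖)
        ((volume.restrict (Metric.ball (0 : EuclideanSpace ℝ (Fin 3)) (2 * lam * π))).prod
          sphMeasure)) :
    (∀ m : Fin 3 → ℤ, kernelMode lam Bk (iVec (-m)) (iVec m) = 0) ∧
    ∀ (fh : ℝ → (Fin 3 → ℤ) → ℂ) (N : ℕ),
      (∀ t : ℝ, HasDerivAt (fun s => fh s 0)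
          (∑ m ∈ Finset.Icc (fun _ => -(N : ℤ)) (fun _ => (N : ℤ)),
            fh t (-m) * fh t m * kernelMode lam Bk (iVec (-m)) (iVec m)) t) →
      ∀ t : ℝ, fh t 0 = fh 0 0 :=
  stmt16_general lam Bk β hBk hint
end
end
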